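/- For every integer n ≥ 2, let φ_{n,1}(r) = sqrt((2/n)³ (n-2)!/(2n(n+1)!)) · (2r/n) L_{n-2}^{(3)}(2r/n) e^{-r/n} be the reduced radial wavefunction of the hydrogen np state. Then S_n := ∫₀^∞ r³ e^{-r} φ_{n,1}(r) dr = 8 n³ (n-1)^{n-3}/(n+1)^{n+3} · sqrt((n+1)!/(n-2)!). -/

import Mathlib

open MeasureTheory

/-- Generalized (associated) Laguerre polynomial
`L^{(m)}_n(x) = ∑_{j=0}^n C(n+m, n-j) (-x)^j / j!`. -/
noncomputable def genLaguerre (n m : ℕ) (x : ℝ) : ℝ :=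
  ∑ j ∈ Finset.range (n + 1), ((n + m).choose (n - j) : ℝ) * (-x) ^ j / j.factorial

/-- Reduced radial wavefunction of the hydrogen `np` state:
`φ_{n,1}(r) = √((2/n)³ (n-2)!/(2n(n+1)!)) · (2r/n) L_{n-2}^{(3)}(2r/n) e^{-r/n}`. -/
noncomputable def hydrogenRadial (n : ℕ) (r : ℝ) : ℝ :=
  Real.sqrt ((2 / (n : ℝ)) ^ 3 * ((n - 2).factorial : ℝ)
      / (2 * (n : ℝ) * ((n + 1).factorial : ℝ)))
    * (2 * r / (n : ℝ)) * genLaguerre (n - 2) 3 (2 * r / (n : ℝ)) * Real.exp (-r / (n : ℝ))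

/-!
Expanding `L_k^{(3)}`, `k = n - 2`, termwise turns `S_n` into a finite sum of Gamma integrals
`∫₀^∞ r^(j+4) e^{-(n+1)r/n} dr`. The identity `C(k+3, k-j) (j+4)!/j! = (j+4) C(k,j) (k+3)!/k!`
collapses that sum to the binomial sum `∑ⱼ (j+4) C(k,j) xʲ = 4(1+x)^k + k x (1+x)^(k-1)`
at `x = -2/(n+1)`, where `1 + x = (n-1)/(n+1)`.
-/

open Finset Real

section Binomial

variable {R : Type*} [CommRing R]

theorem sum_range_choose_mul_pow (k : ℕ) (x : R) :
    ∑ j ∈ range (k + 1), (k.choose j : R) * x ^ j = (1 + x) ^ k := by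
  rw [add_comm (1 : R), add_pow]
  exact sum_congr rfl fun j _ => by ring

theorem sum_range_mul_choose_mul_pow (k : ℕ) (x : R) :
    ∑ j ∈ range (k + 1), (j : R) * k.choose j * x ^ j = k * x * (1 + x) ^ (k - 1) := by
  rcases k with _ | k
  · simp
  rw [sum_range_succ', Nat.add_sub_cancel, ← sum_range_choose_mul_pow, mul_sum]
  simp only [Nat.cast_zero, zero_mul, add_zero]
  refine sum_congr rfl fun j _ => ?_
  have h : ((k : R) + 1) * k.choose j = (k + 1).choose (j + 1) * ((j : R) + 1) := by
    simpa using congrArg (Nat.cast (R := R)) (Nat.add_one_mul_choose_eq k j)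
  push_cast
  linear_combination (-x * x ^ j) * h

theorem sum_range_add_mul_choose_mul_pow (k : ℕ) (c x : R) :
    ∑ j ∈ range (k + 1), ((j : R) + c) * k.choose j * x ^ j
      = c * (1 + x) ^ k + k * x * (1 + x) ^ (k - 1) := by
  simp only [add_mul, sum_add_distrib, sum_range_mul_choose_mul_pow, ← sum_range_choose_mul_pow,
    mul_sum]
  rw [add_comm]
  exact congrArg (· + _) (sum_congr rfl fun j _ => by ring)

end Binomial

theorem Nat.add_choose_sub_mul_factorial_mul_factorial {k j : ℕ} (m : ℕ) (h : j ≤ k) :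
    (k + m).choose (k - j) * (j + m).factorial * k.factorial
      = (k + m).factorial * k.choose j * j.factorial := by
  refine Nat.eq_of_mul_eq_mul_right (Nat.factorial_pos (k - j)) ?_
  have h₁ := Nat.choose_mul_factorial_mul_factorial (show k - j ≤ k + m by omega)
  have h₂ := Nat.choose_mul_factorial_mul_factorial h
  rw [show k + m - (k - j) = j + m by omega] at h₁
  calc _ = ((k + m).choose (k - j) * (k - j).factorial * (j + m).factorial) * k.factorial := by ring
    _ = (k + m).factorial * (k.choose j * j.factorial * (k - j).factorial) := by rw [h₁, h₂]
    _ = _ := by ring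

theorem integrableOn_pow_mul_exp_neg_mul_Ioi (m : ℕ) {a : ℝ} (ha : 0 < a) :
    IntegrableOn (fun r : ℝ => r ^ m * exp (-(a * r))) (Set.Ioi 0) := by
  simpa using integrableOn_rpow_mul_exp_neg_mul_rpow (s := m) (p := 1)
    (by linarith [(Nat.cast_nonneg m : (0 : ℝ) ≤ m)]) one_pos ha

theorem integral_pow_mul_exp_neg_mul_Ioi (m : ℕ) {a : ℝ} (ha : 0 < a) :
    ∫ r in Set.Ioi (0 : ℝ), r ^ m * exp (-(a * r)) = m.factorial / a ^ (m + 1) := by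
  have h := integral_rpow_mul_exp_neg_mul_Ioi (a := m + 1) (by positivity) ha
  rw [add_sub_cancel_right, Gamma_nat_eq_factorial, ← Nat.cast_add_one, rpow_natCast] at h
  simp only [rpow_natCast] at h
  rw [h, one_div, inv_pow, inv_mul_eq_div]

theorem integral_pow_mul_genLaguerre_mul_exp_neg_mul_Ioi (k m p : ℕ) (b : ℝ) {a : ℝ}
    (ha : 0 < a) :
    ∫ r in Set.Ioi (0 : ℝ), r ^ p * genLaguerre k m (b * r) * exp (-(a * r))
      = ∑ j ∈ range (k + 1), ((k + m).choose (k - j) : ℝ) * (-b) ^ j / j.factorial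
          * ((j + p).factorial / a ^ (j + p + 1)) := by
  have hexpand : ∀ r : ℝ, r ^ p * genLaguerre k m (b * r) * exp (-(a * r))
      = ∑ j ∈ range (k + 1), ((k + m).choose (k - j) : ℝ) * (-b) ^ j / j.factorial
          * (r ^ (j + p) * exp (-(a * r))) := by
    intro r
    rw [genLaguerre, mul_sum, sum_mul]
    exact sum_congr rfl fun j _ => by ring
  simp_rw [hexpand]
  rw [integral_finsetSum _ fun j _ => (integrableOn_pow_mul_exp_neg_mul_Ioi _ ha).const_mul _]
  simp_rw [integral_const_mul, integral_pow_mul_exp_neg_mul_Ioi _ ha]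

theorem integral_pow_succ_mul_genLaguerre_mul_exp_neg_mul_Ioi (k m : ℕ) (b : ℝ) {a : ℝ}
    (ha : 0 < a) :
    ∫ r in Set.Ioi (0 : ℝ), r ^ (m + 1) * genLaguerre k m (b * r) * exp (-(a * r))
      = (k + m).factorial / (k.factorial * a ^ (m + 2))
          * ((m + 1) * (1 - b / a) ^ k - k * (b / a) * (1 - b / a) ^ (k - 1)) := by
  rw [integral_pow_mul_genLaguerre_mul_exp_neg_mul_Ioi _ _ _ _ ha,
    show (m + 1) * (1 - b / a) ^ k - k * (b / a) * (1 - b / a) ^ (k - 1)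
      = ((m : ℝ) + 1) * (1 + -(b / a)) ^ k + k * -(b / a) * (1 + -(b / a)) ^ (k - 1) by ring,
    ← sum_range_add_mul_choose_mul_pow, mul_sum]
  refine sum_congr rfl fun j hj => ?_
  have hcoeff : ((k + m).choose (k - j) : ℝ) * (j + m).factorial * k.factorial
      = (k + m).factorial * k.choose j * j.factorial := by
    exact_mod_cast Nat.add_choose_sub_mul_factorial_mul_factorial m
      (Nat.lt_succ_iff.mp (mem_range.mp hj))
  have hfac : ((j + m + 1).factorial : ℝ) = (j + m + 1) * (j + m).factorial := by
    push_cast [Nat.factorial_succ]; ring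
  rw [show j + (m + 1) = j + m + 1 by ring, hfac, ← neg_div, div_pow,
    show j + m + 1 + 1 = j + (m + 2) by ring, pow_add]
  field_simp
  linear_combination (j + m + 1) * (-b) ^ j * hcoeff

theorem sqrt_hydrogenRadial_normalization {n : ℕ} (hn : 0 < n) :
    Real.sqrt ((2 / n) ^ 3 * (n - 2).factorial / (2 * n * (n + 1).factorial))
      = 2 / (n ^ 2 * Real.sqrt ((n + 1).factorial / (n - 2).factorial)) := by
  rw [← Real.sqrt_sq (by positivity : (0 : ℝ) ≤ 2 / (n ^ 2 * _))]
  congr 1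
  rw [div_pow, div_pow, mul_pow, Real.sq_sqrt (by positivity)]
  field_simp

theorem pow_three_mul_exp_neg_mul_hydrogenRadial {n : ℕ} (hn : 0 < n) (r : ℝ) :
    r ^ 3 * exp (-r) * hydrogenRadial n r
      = 4 / (n ^ 3 * Real.sqrt ((n + 1).factorial / (n - 2).factorial))
          * (r ^ (3 + 1) * genLaguerre (n - 2) 3 (2 / n * r) * exp (-((n + 1) / n * r))) := by
  have hexp : exp (-r) * exp (-r / n) = exp (-((n + 1) / n * r)) := by
    rw [← exp_add]; congr 1; field_simp; ring
  rw [hydrogenRadial, sqrt_hydrogenRadial_normalization hn, ← hexp, mul_div_right_comm 2 r]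
  field_simp
  ring

theorem four_mul_pow_sub_mul_pow_eq {n : ℕ} (hn : 2 ≤ n) :
    ((3 : ℝ) + 1) * (1 - 2 / (n + 1)) ^ (n - 2)
        - (n - 2 : ℕ) * (2 / (n + 1)) * (1 - 2 / (n + 1)) ^ (n - 2 - 1)
      = 2 * n * (n - 1) ^ (n - 3) / (n + 1) ^ (n - 2) := by
  obtain rfl | hn3 := hn.eq_or_lt
  · norm_num
  obtain ⟨k, rfl⟩ : ∃ k, n = k + 3 := ⟨n - 3, by omega⟩
  rw [show k + 3 - 2 = k + 1 by omega, show k + 3 - 3 = k by omega, Nat.add_sub_cancel]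
  push_cast
  rw [show 1 - 2 / ((k : ℝ) + 3 + 1) = (k + 2) / (k + 4) by field_simp; ring,
    div_pow, div_pow, pow_succ]
  field_simp
  ring

/-- The hydrogen `1s → np` radial dipole integral:
`S_n = ∫₀^∞ r³ e^{-r} φ_{n,1}(r) dr = 8 n³ (n-1)^{n-3}/(n+1)^{n+3} √((n+1)!/(n-2)!)`. -/
theorem hydrogen_dipole_integral (n : ℕ) (hn : 2 ≤ n) :
    ∫ r in Set.Ioi (0 : ℝ), r ^ 3 * Real.exp (-r) * hydrogenRadial n r
      = 8 * (n : ℝ) ^ 3 * ((n : ℝ) - 1) ^ (n - 3) / ((n : ℝ) + 1) ^ (n + 3)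
          * Real.sqrt (((n + 1).factorial : ℝ) / ((n - 2).factorial : ℝ)) := by
  have hn0 : 0 < n := by omega
  simp_rw [pow_three_mul_exp_neg_mul_hydrogenRadial hn0]
  rw [integral_const_mul,
    integral_pow_succ_mul_genLaguerre_mul_exp_neg_mul_Ioi _ _ _ (by positivity),
    show 2 / n / ((n + 1) / n) = 2 / ((n : ℝ) + 1) by field_simp, Nat.cast_ofNat,
    four_mul_pow_sub_mul_pow_eq hn, show n - 2 + 3 = n + 1 by omega,
    show n + 3 = n - 2 + 5 by omega, pow_add _ (n - 2)]
  have hF : 0 < ((n + 1).factorial : ℝ) / (n - 2).factorial := by positivity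
  generalize hs : Real.sqrt (((n + 1).factorial : ℝ) / (n - 2).factorial) = s
  have hfac : ((n + 1).factorial : ℝ) = s ^ 2 * (n - 2).factorial := by
    rw [← hs, Real.sq_sqrt hF.le]; field_simp
  rw [hfac, div_pow]
  field_simp
  ring
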